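/- arXiv:2402.09143 — 4 statements merged into one kernel-verified Lean document; each statement's English description precedes it below -/
import Mathlib

section
/- Let F be a field and G = F ⋊ F^× its group of affine transformations. If N is a normal subgroup of G that is not contained in the subgroup F × {1} (the translations), then N contains all of F × {1}. -/
/-- The group of affine transformations of a field `F`: the underlying set is
`F × Fˣ`, where `⟨b, a⟩` represents `x ↦ a·x + b`, the multiplication is
`(b,a)·(d,c) = (b + a·d, a·c)`, the identity is `(0,1)` and the inverse is
`(b,a)⁻¹ = (−a⁻¹·b, a⁻¹)`. -/
@[ext]
structure Aff (F : Type*) [Field F] where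
  b : F
  a : Fˣ

namespace Aff

variable {F : Type*} [Field F]

instance : Group (Aff F) where
  mul p q := ⟨p.b + (p.a : F) * q.b, p.a * q.a⟩
  one := ⟨0, 1⟩
  inv p := ⟨-(((p.a⁻¹ : Fˣ) : F) * p.b), p.a⁻¹⟩
  mul_assoc p q r := by
    ext
    · show (p.b + (p.a : F) * q.b) + ((p.a * q.a : Fˣ) : F) * r.b
        = p.b + (p.a : F) * (q.b + (q.a : F) * r.b)
      push_cast; ring
    · show ((p.a * q.a * r.a : Fˣ) : F) = ((p.a * (q.a * r.a) : Fˣ) : F)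
      push_cast; ring
  one_mul p := by
    ext
    · show (0 : F) + ((1 : Fˣ) : F) * p.b = p.b
      simp
    · show (((1 : Fˣ) * p.a : Fˣ) : F) = (p.a : F)
      simp
  mul_one p := by
    ext
    · show p.b + (p.a : F) * 0 = p.b
      simp
    · show ((p.a * 1 : Fˣ) : F) = (p.a : F)
      simp
  inv_mul_cancel p := by
    ext
    · show -(((p.a⁻¹ : Fˣ) : F) * p.b) + ((p.a⁻¹ : Fˣ) : F) * p.b = (0 : F)
      ring
    · show ((p.a⁻¹ * p.a : Fˣ) : F) = ((1 : Fˣ) : F)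
      simp

@[simp] lemma mul_b (p q : Aff F) : (p * q).b = p.b + (p.a : F) * q.b := rfl
@[simp] lemma mul_a (p q : Aff F) : (p * q).a = p.a * q.a := rfl
@[simp] lemma one_b : (1 : Aff F).b = 0 := rfl
@[simp] lemma one_a : (1 : Aff F).a = 1 := rfl

/-- Projection of the affine group onto the multiplicative group `Fˣ`.
Its kernel is the translation subgroup `F × {1}`. -/
def proj (F : Type*) [Field F] : Aff F →* Fˣ where
  toFun p := p.a
  map_one' := rfl
  map_mul' _ _ := rfl

end Aff

/-- If `N` is a normal subgroup of the affine group `G = F ⋊ F^×` of a field `F`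
which is not contained in the translation subgroup `F × {1}` (the kernel of the
projection to `F^×`), then `N` contains all translations. -/
theorem normal_subgroup_not_in_translations_contains_translations
    {F : Type*} [Field F] (N : Subgroup (Aff F)) (hN : N.Normal)
    (h : ¬ N ≤ (Aff.proj F).ker) :
    (Aff.proj F).ker ≤ N := by
  rw [SetLike.not_le_iff_exists] at h
  obtain ⟨n, hnN, hn⟩ := h
  have hna : (n.a : F) ≠ 1 := by
    intro hc
    exact hn (by simpa [Aff.proj, MonoidHom.mem_ker] using Units.ext hc)
  have hden : (1 : F) - (n.a : F) ≠ 0 := sub_ne_zero.mpr (Ne.symm hna)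
  intro t ht
  have hta : t.a = 1 := by simpa [Aff.proj, MonoidHom.mem_ker] using ht
  set c : F := t.b / (1 - (n.a : F)) with hc
  set g : Aff F := ⟨c, 1⟩ with hg
  have key : g * n * g⁻¹ * n⁻¹ ∈ N :=
    N.mul_mem (hN.conj_mem n hnN g) (N.inv_mem hnN)
  have heq : g * n * g⁻¹ * n⁻¹ = t := by
    have hinvg : g⁻¹ = ⟨-(((1:Fˣ)⁻¹ : Fˣ) * c : F), (1:Fˣ)⁻¹⟩ := rfl
    have hinvn : n⁻¹ = ⟨-(((n.a⁻¹ : Fˣ) : F) * n.b), n.a⁻¹⟩ := rfl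
    ext
    · show (c + (1:Fˣ) * n.b + ((1:Fˣ) * n.a : Fˣ) * (-(((1:Fˣ)⁻¹ : Fˣ) * c : F)))
        + (((1:Fˣ) * n.a * (1:Fˣ)⁻¹ : Fˣ) : F) * (-(((n.a⁻¹ : Fˣ) : F) * n.b)) = t.b
      have ha0 : (n.a : F) ≠ 0 := n.a.ne_zero
      push_cast [Units.val_inv_eq_inv_val]
      rw [hc]
      field_simp
      ring
    · simp [hta, hinvg, hinvn]; rfl
  rwa [heq] at key
end

section
/- Let F be an infinite field and G = F ⋊ F^× its affine group. If G₁ ≤ G is a subgroup of finite index, then G₁ contains the translation subgroup F × {1}, and every finite normal subgroup of G₁ is trivial. -/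
namespace Aff

variable {F : Type*} [Field F]

@[simp] lemma inv_b (p : Aff F) : (p⁻¹).b = -(((p.a⁻¹ : Fˣ) : F) * p.b) := rfl
@[simp] lemma inv_a (p : Aff F) : (p⁻¹).a = p.a⁻¹ := rfl
@[simp] lemma proj_apply (p : Aff F) : proj F p = p.a := rfl

lemma conj_eval (g n : Aff F) :
    g * n * g⁻¹ = ⟨(g.a : F) * n.b + (1 - (n.a : F)) * g.b, n.a⟩ := by
  have hinv : ((g.a⁻¹ : Fˣ) : F) = ((g.a : F))⁻¹ := Units.val_inv_eq_inv_val g.a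
  ext
  · show g.b + (g.a : F) * n.b + ((g.a * n.a : Fˣ) : F) * (-(((g.a⁻¹ : Fˣ) : F) * g.b))
      = (g.a : F) * n.b + (1 - (n.a : F)) * g.b
    push_cast [hinv]
    field_simp
    ring
  · show ((g.a * n.a * g.a⁻¹ : Fˣ) : F) = (n.a : F)
    push_cast
    field_simp

end Aff

section Part

variable {F : Type*} [Field F] [Infinite F]

lemma aff_ker_le (G₁ : Subgroup (Aff F)) (hG₁ : G₁.FiniteIndex) :
    (Aff.proj F).ker ≤ G₁ := by
  haveI := hG₁
  set K := G₁.normalCore with hKdef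
  haveI hKfi : K.FiniteIndex := Subgroup.finiteIndex_normalCore G₁
  have hKnorm : K.Normal := Subgroup.normalCore_normal G₁
  haveI hfin : Finite (Aff F ⧸ K) := Subgroup.finite_quotient_of_finiteIndex
  obtain ⟨b₁, b₂, hne, heq⟩ := Finite.exists_ne_map_eq_of_infinite
    (fun b : F => QuotientGroup.mk (s := K) (⟨b, 1⟩ : Aff F))
  have hb0 : (⟨b₂ - b₁, 1⟩ : Aff F) ∈ K := by
    have h := (QuotientGroup.eq (s := K)).mp heq
    have : (⟨b₁, 1⟩ : Aff F)⁻¹ * ⟨b₂, 1⟩ = ⟨b₂ - b₁, 1⟩ := by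
      ext
      · simp only [Aff.mul_b, Aff.inv_b, Aff.inv_a, inv_one, Units.val_one]
        ring
      · simp
    rwa [this] at h
  set b₀ : F := b₂ - b₁ with hb₀def
  have hb₀ne : b₀ ≠ 0 := sub_ne_zero.mpr hne.symm
  have htrans : ∀ x : F, (⟨x, 1⟩ : Aff F) ∈ K := by
    intro x
    rcases eq_or_ne x 0 with hx | hx
    · exact hx ▸ (show (⟨0,1⟩ : Aff F) = 1 from rfl) ▸ K.one_mem
    · set a : Fˣ := Units.mk0 (x * b₀⁻¹) (mul_ne_zero hx (inv_ne_zero hb₀ne)) with hadef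
      have h := hKnorm.conj_mem _ hb0 (⟨0, a⟩ : Aff F)
      have hcalc : (⟨0, a⟩ : Aff F) * ⟨b₀, 1⟩ * (⟨0, a⟩ : Aff F)⁻¹ = ⟨x, 1⟩ := by
        rw [Aff.conj_eval]
        ext
        · show (a : F) * b₀ + (1 - ((1:Fˣ):F)) * 0 = x
          have ha : (a : F) = x * b₀⁻¹ := rfl
          rw [ha]
          field_simp
          simp
        · rfl
      rwa [hcalc] at h
  intro g hg
  have hga : g.a = 1 := hg
  have hgeq : g = ⟨g.b, 1⟩ := by ext <;> simp [hga]
  rw [hgeq]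
  exact G₁.normalCore_le (htrans g.b)

end Part

/-- Let `F` be an infinite field and `G = F ⋊ F^×` its affine group. Every
finite-index subgroup `G₁ ≤ G` contains the translation subgroup `F × {1}`
(the kernel of the projection to `F^×`), and every finite normal subgroup of
`G₁` is trivial. -/
theorem finite_index_subgroup_of_affine_group
    {F : Type*} [Field F] [Infinite F]
    (G₁ : Subgroup (Aff F)) (hG₁ : G₁.FiniteIndex) :
    (Aff.proj F).ker ≤ G₁ ∧
      ∀ N : Subgroup ↥G₁, N.Normal → (N : Set ↥G₁).Finite → N = ⊥ := by
  have hker := aff_ker_le G₁ hG₁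
  have hFc : Set.Infinite ({0}ᶜ : Set F) := (Set.finite_singleton (0:F)).infinite_compl
  haveI : Infinite ({0}ᶜ : Set F) := hFc.to_subtype
  haveI hFu : Infinite Fˣ :=
    Infinite.of_injective (fun x : ({0}ᶜ : Set F) => Units.mk0 x.1 x.2)
      (fun a b h => Subtype.ext (congrArg Units.val h))
  refine ⟨hker, ?_⟩
  intro N hN hNfin
  haveI : Finite ↥N := hNfin.to_subtype
  rw [Subgroup.eq_bot_iff_forall]
  intro x hx
  by_contra hx1
  set n : Aff F := (x : Aff F) with hndef
  have hn1 : n ≠ 1 := fun h => hx1 (Subtype.ext h)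
  have hconjmem : ∀ g : ↥G₁, g * x * g⁻¹ ∈ N := fun g => hN.conj_mem x hx g
  have hconjval : ∀ g : ↥G₁, ((g * x * g⁻¹ : ↥G₁) : Aff F)
      = ⟨((g : Aff F).a : F) * n.b + (1 - (n.a : F)) * (g : Aff F).b, n.a⟩ := by
    intro g
    push_cast
    exact Aff.conj_eval (g : Aff F) n
  rcases eq_or_ne n.a 1 with hu | hu
  · -- translation case: conjugate by elements of varying proj
    have hb : n.b ≠ 0 := by
      intro hb
      exact hn1 (by ext <;> simp [hb, hu])
    set S := G₁.map (Aff.proj F) with hSdef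
    have hSfi : S.FiniteIndex := by
      constructor
      have hsurj : Function.Surjective (Aff.proj F) := fun a => ⟨⟨0, a⟩, rfl⟩
      have hdvd : S.index ∣ G₁.index := Subgroup.index_map_dvd (H := G₁) hsurj
      intro h0
      exact hG₁.index_ne_zero (Nat.eq_zero_of_zero_dvd (h0 ▸ hdvd))
    haveI hSinf : Infinite ↥S := by
      by_contra hinf
      rw [not_infinite_iff_finite] at hinf
      have hcard := S.card_mul_index
      rw [Nat.card_eq_zero_of_infinite (α := Fˣ)] at hcard
      rcases Nat.mul_eq_zero.mp hcard with h | h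
      · rw [Nat.card_eq_zero] at h
        rcases h with h | h
        · exact h.false ⟨1, S.one_mem⟩
        · exact (not_infinite_iff_finite.mpr hinf) h
      · exact hSfi.index_ne_zero h
    have hchoice : ∀ s : ↥S, ∃ g : ↥G₁, (g : Aff F).a = (s : Fˣ) := by
      intro s
      obtain ⟨g, hg, hgs⟩ := s.2
      exact ⟨⟨g, hg⟩, hgs⟩
    choose f hf using hchoice
    obtain ⟨s₁, s₂, hne, heq⟩ := Finite.exists_ne_map_eq_of_infinite
      (fun s : ↥S => (⟨(f s) * x * (f s)⁻¹, hconjmem (f s)⟩ : ↥N))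
    apply hne
    have heqA := congrArg (fun y : ↥N => ((y : ↥G₁) : Aff F)) heq
    simp only [hconjval] at heqA
    have hb' := congrArg Aff.b heqA
    simp only [hu, hf] at hb'
    push_cast [hu] at hb'
    simp only [sub_self, zero_mul, add_zero] at hb'
    have h2 : ((s₁ : Fˣ) : F) = ((s₂ : Fˣ) : F) := mul_right_cancel₀ hb hb'
    ext
    exact_mod_cast h2
  · -- n.a ≠ 1 : conjugate by translations
    have htransmem : ∀ c : F, (⟨c, 1⟩ : Aff F) ∈ G₁ :=
      fun c => hker (show (⟨c,1⟩ : Aff F).a = 1 from rfl)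
    obtain ⟨c₁, c₂, hne, heq⟩ := Finite.exists_ne_map_eq_of_infinite
      (fun c : F => (⟨(⟨⟨c,1⟩, htransmem c⟩ : ↥G₁) * x * (⟨⟨c,1⟩, htransmem c⟩ : ↥G₁)⁻¹,
          hconjmem _⟩ : ↥N))
    apply hne
    have heqA := congrArg (fun y : ↥N => ((y : ↥G₁) : Aff F)) heq
    simp only [hconjval] at heqA
    have hb' := congrArg Aff.b heqA
    simp only at hb'
    have hne1 : (1 : F) - (n.a : F) ≠ 0 := by
      rw [sub_ne_zero]
      exact fun h => hu (Units.ext h.symm)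
    exact mul_left_cancel₀ hne1 (add_left_cancel hb')
end

section
/- Let F be an infinite field, and let B ≤ F^× be a subgroup of finite index in the multiplicative group. Let A ⊆ F be a subring containing B. Then A = F. -/
/-- Let `F` be an infinite field, `B ≤ F^×` a subgroup of finite index in the
multiplicative group, and `A ⊆ F` a subring containing `B`. Then `A = F`. -/
theorem subring_containing_finite_index_multiplicative_subgroup_eq_top
    {F : Type*} [Field F] [Infinite F]
    (B : Subgroup Fˣ) (hB : B.FiniteIndex)
    (A : Subring F) (hBA : ∀ b : Fˣ, b ∈ B → (b : F) ∈ A) :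
    A = ⊤ := by
  have hn : B.index ≠ 0 := hB.index_ne_zero
  -- A is closed under inverses
  have hinv : ∀ a : F, a ∈ A → a⁻¹ ∈ A := by
    intro a ha
    rcases eq_or_ne a 0 with rfl | h0
    · simpa using A.zero_mem
    · have hu : ((Units.mk0 a h0)⁻¹ : Fˣ) ^ B.index ∈ B := Subgroup.pow_index_mem B _
      have h1 : (a⁻¹) ^ B.index ∈ A := by
        have := hBA _ hu
        simpa using this
      have h2 : a ^ (B.index - 1) * (a⁻¹) ^ B.index ∈ A :=
        A.mul_mem (A.pow_mem ha _) h1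
      have hpow : a ^ B.index = a ^ (B.index - 1) * a := by
        conv_lhs => rw [(Nat.sub_add_cancel (Nat.one_le_iff_ne_zero.mpr hn)).symm]
        rw [pow_succ]
      have key : a ^ (B.index - 1) * (a⁻¹) ^ B.index = a⁻¹ := by
        rw [inv_pow, hpow, mul_inv, ← mul_assoc,
          mul_inv_cancel₀ (pow_ne_zero _ h0), one_mul]
      rwa [key] at h2
  -- `Fˣ` is infinite
  haveI := hB
  haveI hFu : Infinite Fˣ := by
    have hfin : Set.Infinite ({(0 : F)}ᶜ) := (Set.finite_singleton 0).infinite_compl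
    have : Infinite ({(0 : F)}ᶜ : Set F) := Set.infinite_coe_iff.mpr hfin
    exact Infinite.of_injective
      (fun x : ({(0 : F)}ᶜ : Set F) => Units.mk0 x.1 (Set.mem_compl_singleton_iff.mp x.2))
      (fun x y hxy => Subtype.ext (by simpa [Units.ext_iff] using hxy))
  -- `B` is infinite, hence `A` is infinite
  haveI hBinf : Infinite B := by
    by_contra hfin
    rw [not_infinite_iff_finite] at hfin
    have hmul : B.index * Nat.card B = 0 := by
      rw [B.index_mul_card]; exact Nat.card_eq_zero_of_infinite
    rcases Nat.mul_eq_zero.mp hmul with h | h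
    · exact hn h
    · exact Nat.card_ne_zero.mpr ⟨⟨⟨1, B.one_mem⟩⟩, hfin⟩ h
  haveI hAinf : Infinite A :=
    Infinite.of_injective (fun b : B => (⟨((b : Fˣ) : F), hBA _ b.2⟩ : A))
      (fun x y hxy => by
        apply Subtype.ext
        apply Units.ext
        simpa using congrArg Subtype.val hxy)
  -- finite quotient
  haveI hQ : Finite (Fˣ ⧸ B) := B.finite_quotient_of_finiteIndex
  -- main argument
  rw [eq_top_iff]
  intro x _
  by_cases hx : ∃ a : F, a ∈ A ∧ x + a = 0
  · obtain ⟨a, ha, hxa⟩ := hx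
    have : x = -a := by linear_combination hxa
    rw [this]; exact A.neg_mem ha
  · push_neg at hx
    have hne : ∀ a : A, x + (a : F) ≠ 0 := fun a => hx a a.2
    obtain ⟨a, a', haa', heq⟩ :=
      Finite.exists_ne_map_eq_of_infinite
        (fun a : A => QuotientGroup.mk (s := B) (Units.mk0 (x + a) (hne a)))
    rw [QuotientGroup.eq] at heq
    set u : Fˣ := (Units.mk0 (x + a) (hne a))⁻¹ * Units.mk0 (x + a') (hne a')
    have huA : (u : F) ∈ A := hBA _ heq
    have huF : (u : F) = (x + a)⁻¹ * (x + a') := by simp [u]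
    have hu1 : (u : F) ≠ 1 := by
      intro h
      rw [h] at huF
      exact haa' (Subtype.ext (add_left_cancel ((inv_mul_eq_one₀ (hne a)).mp huF.symm)))
    have hmu : (x + (a : F)) * u = x + a' := by
      rw [huF, ← mul_assoc, mul_inv_cancel₀ (hne a), one_mul]
    have hxu : x * (1 - (u : F)) = (a : F) * u - a' := by linear_combination -hmu
    have h1u : (1 - (u : F)) ≠ 0 := fun h => hu1 (by linear_combination -h)
    have hxval : x = ((a : F) * u - a') * (1 - (u : F))⁻¹ := by
      field_simp
      linear_combination hxu
    rw [hxval]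
    exact A.mul_mem (A.sub_mem (A.mul_mem a.2 huA) a'.2) (hinv _ (A.sub_mem A.one_mem huA))
end

section
/- Let G and H be groups, Z ≤ G × H a subgroup, and let Z₁ = Z ∩ ({1_G} × H). Suppose Z₁ is finite and central in Z. Let H₀ = π_H(Z₁) ≤ H and let H₁ be the centralizer of H₀ in H. Then π_H(Z) ⊆ H₁, i.e., Z ≤ G × H₁, and the image T of Z in G × (H₁/H₀) under the quotient map has trivial intersection with {1_G} × (H₁/H₀); consequently T is the graph of a group homomorphism from π_G(Z) to H₁/H₀. -/
/-- Let `G`, `H` be groups, `Z ≤ G × H` a subgroup, and `Z₁ = Z ∩ ({1} × H)`.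
Suppose `Z₁` is finite and central in `Z`. Let `H₀ = π_H(Z₁)` and let `H₁` be
the centralizer of `H₀` in `H`. Then `π_H(Z) ⊆ H₁` (i.e. `Z ≤ G × H₁`), `H₀ ≤ H₁`
(so the quotient `H₁/H₀` makes sense), and the image `T` of `Z` in
`G × (H₁/H₀)` has trivial intersection with `{1} × (H₁/H₀)`: any `z ∈ Z` with
`z.1 = 1` has `z.2 ∈ H₀`. Consequently `T` is the graph of a group homomorphism
from `π_G(Z)` to `H₁/H₀`: whenever `z, z' ∈ Z` have the same first coordinate,
their second coordinates agree modulo `H₀`. -/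
theorem graph_of_homomorphism_from_central_finite_kernel
    {G H : Type*} [Group G] [Group H] (Z : Subgroup (G × H)) :
    let Z₁ : Subgroup (G × H) := Z ⊓ Subgroup.prod (⊥ : Subgroup G) (⊤ : Subgroup H)
    let H₀ : Subgroup H := Subgroup.map (MonoidHom.snd G H) Z₁
    let H₁ : Subgroup H := Subgroup.centralizer (H₀ : Set H)
    (Z₁ : Set (G × H)).Finite →
    (∀ z ∈ Z, ∀ w ∈ Z₁, z * w = w * z) →
    (∀ z ∈ Z, z.2 ∈ H₁) ∧
      H₀ ≤ H₁ ∧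
      (∀ z ∈ Z, z.1 = 1 → z.2 ∈ H₀) ∧
      (∀ z ∈ Z, ∀ z' ∈ Z, z.1 = z'.1 → z.2 * z'.2⁻¹ ∈ H₀) := by
  intro Z₁ H₀ H₁ _ hcomm
  have hmem : ∀ z ∈ Z, z.1 = 1 → z.2 ∈ H₀ := by
    intro z hz h1
    exact ⟨z, ⟨hz, by simp [h1], trivial⟩, rfl⟩
  have hcent : ∀ z ∈ Z, z.2 ∈ H₁ := by
    intro z hz
    intro h hh
    obtain ⟨w, hw, rfl⟩ := hh
    have := hcomm z hz w hw
    have := congrArg Prod.snd this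
    simpa using this.symm
  refine ⟨hcent, fun h hh => ?_, hmem, ?_⟩
  · obtain ⟨w, hw, rfl⟩ := hh
    exact hcent w hw.1
  · intro z hz z' hz' h1
    have : z * z'⁻¹ ∈ Z := mul_mem hz (inv_mem hz')
    exact hmem _ this (by simp [h1])
end
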